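/- Let A be an m×n matrix with entries in [0,1] and b ∈ [0,1]^m, and let x̄ be defined by x̄_j = min over {i : a_{ij} ≥ b_i} of (b_i + 1 - a_{ij}) (empty min = 1). The feasible set S(A,b) = {x ∈ [0,1]^n : max_j T_L(a_{ij}, x_j) = b_i for all i} is nonempty if and only if x̄ ∈ S(A,b). -/

import Mathlib

/-- The Łukasiewicz t-norm. -/
noncomputable def TL (a x : ℝ) : ℝ := max (a + x - 1) 0

/-- The candidate maximum solution `x̄` (empty min = 1, handled by the `if`). -/
noncomputable def xbar {m n : ℕ} [NeZero m] (A : Fin m → Fin n → ℝ) (b : Fin m → ℝ)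
    (j : Fin n) : ℝ :=
  Finset.univ.inf' Finset.univ_nonempty
    (fun i => if b i ≤ A i j then b i + 1 - A i j else 1)

/-- `x` is a feasible solution of the system `A φ x = b`. -/
def Feasible {m n : ℕ} [NeZero m] [NeZero n] (A : Fin m → Fin n → ℝ) (b : Fin m → ℝ)
    (x : Fin n → ℝ) : Prop :=
  (∀ j, x j ∈ Set.Icc (0:ℝ) 1) ∧
  ∀ i, Finset.univ.sup' Finset.univ_nonempty (fun j => TL (A i j) (x j)) = b i

/-- The candidate minimal point `X(e)` associated to a selection `e`
(empty max = 0, handled by the `if`). -/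
noncomputable def Xe {m n : ℕ} [NeZero m] (A : Fin m → Fin n → ℝ) (b : Fin m → ℝ)
    (e : Fin m → Fin n) (j : Fin n) : ℝ :=
  Finset.univ.sup' Finset.univ_nonempty
    (fun i => if e i = j ∧ b i ≠ 0 then b i + 1 - A i j else 0)

/-- `e` is a valid selection: `e i ∈ J̄ᵢ` for every `i`. -/
def ValidSel {m n : ℕ} [NeZero m] (A : Fin m → Fin n → ℝ) (b : Fin m → ℝ)
    (e : Fin m → Fin n) : Prop :=
  ∀ i, b i ≤ A i (e i) ∧ TL (A i (e i)) (xbar A b (e i)) = b i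

/-
`x̄` is the greatest `x ≤ 1` with `T_L(a_ij, x_j) ≤ b_i` for all `i, j`. Every solution satisfies
these inequalities, so it lies below `x̄`; since `T_L` is monotone, the row maxima at `x̄` are then
squeezed between those of the solution and `b`.
-/

theorem TL_mono_right (a : ℝ) : Monotone (TL a) :=
  fun _ _ h => max_le_max (by linarith) le_rfl

theorem TL_le_iff {a x c : ℝ} (hc : 0 ≤ c) : TL a x ≤ c ↔ a + x - 1 ≤ c := by
  simp [TL, hc]

section xbar

variable {m n : ℕ} [NeZero m] {A : Fin m → Fin n → ℝ} {b : Fin m → ℝ}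

theorem xbar_le_one (A : Fin m → Fin n → ℝ) (b : Fin m → ℝ) (j : Fin n) : xbar A b j ≤ 1 := by
  refine Finset.inf'_le_of_le _ (Finset.mem_univ 0) ?_
  split_ifs with h
  · linarith
  · exact le_rfl

theorem xbar_nonneg (hA : ∀ i j, A i j ≤ 1) (hb : ∀ i, 0 ≤ b i) (j : Fin n) : 0 ≤ xbar A b j := by
  refine Finset.le_inf' _ _ fun i _ => ?_
  split_ifs
  · linarith [hA i j, hb i]
  · exact zero_le_one

theorem TL_xbar_le (hb : ∀ i, 0 ≤ b i) (i : Fin m) (j : Fin n) : TL (A i j) (xbar A b j) ≤ b i := by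
  rw [TL_le_iff (hb i)]
  by_cases h : b i ≤ A i j
  · have hle : xbar A b j ≤ if b i ≤ A i j then b i + 1 - A i j else 1 :=
      Finset.inf'_le _ (Finset.mem_univ i)
    rw [if_pos h] at hle
    linarith
  · linarith [xbar_le_one A b j]

theorem le_xbar {x : Fin n → ℝ} (hx : ∀ j, x j ≤ 1) (hTL : ∀ i j, TL (A i j) (x j) ≤ b i)
    (j : Fin n) : x j ≤ xbar A b j := by
  refine Finset.le_inf' _ _ fun i _ => ?_
  split_ifs
  · linarith [(le_max_left _ _).trans (hTL i j)]
  · exact hx j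

variable [NeZero n]

theorem Feasible.TL_le {x : Fin n → ℝ} (hx : Feasible A b x) (i : Fin m) (j : Fin n) :
    TL (A i j) (x j) ≤ b i :=
  hx.2 i ▸ Finset.le_sup' (fun j => TL (A i j) (x j)) (Finset.mem_univ j)

theorem Feasible.feasible_xbar (hA : ∀ i j, A i j ≤ 1) (hb : ∀ i, 0 ≤ b i) {x : Fin n → ℝ}
    (hx : Feasible A b x) : Feasible A b (xbar A b) := by
  refine ⟨fun j => ⟨xbar_nonneg hA hb j, xbar_le_one A b j⟩, fun i => le_antisymm
    (Finset.sup'_le _ _ fun j _ => TL_xbar_le hb i j) ?_⟩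
  rw [← hx.2 i]
  exact Finset.sup'_mono_fun fun j _ =>
    TL_mono_right _ (le_xbar (fun j => (hx.1 j).2) hx.TL_le j)

end xbar

theorem stmt_7 (m n : ℕ) [NeZero m] [NeZero n] (A : Fin m → Fin n → ℝ) (b : Fin m → ℝ)
    (hA : ∀ i j, A i j ∈ Set.Icc (0:ℝ) 1) (hb : ∀ i, b i ∈ Set.Icc (0:ℝ) 1) :
    (∃ x, Feasible A b x) ↔ Feasible A b (xbar A b) :=
  ⟨fun ⟨_, hx⟩ => hx.feasible_xbar (fun i j => (hA i j).2) (fun i => (hb i).1), fun h => ⟨_, h⟩⟩
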